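/- arXiv:2509.25156 — 2 statements merged into one kernel-verified Lean document; each statement's English description precedes it below -/
import Mathlib

section
/- Let n ≥ 2 and consider the symmetric group S_{n+1} of permutations of {1,…,n+1}, with simple transpositions s_i = (i, i+1) for 1 ≤ i ≤ n, and with composition (u·v)(i) = u(v(i)). Let w₀ᴾ be the longest element of the parabolic subgroup generated by s_2,…,s_n, namely the permutation fixing 1 and sending i to n+3−i for 2 ≤ i ≤ n+1. Then for every k with 2 ≤ k ≤ n, the element w = w₀ᴾ·s_1·s_2⋯s_{k−1} satisfies w(j) > w(j+1) for every j with 1 ≤ j ≤ n and j ≠ k; that is, every simple transposition s_j with j ≠ k lies in the right descent set of w. -/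
/-!
The product `s₁ s₂ ⋯ s_{k-1}` is the cycle sending `j ↦ j + 1` for `1 ≤ j < k` and `k ↦ 1`.
Hence `w` agrees with the reversal `w₀ᴾ` shifted by one on positions `1, …, k - 1`, takes the
minimal value `1` at `k`, and agrees with `w₀ᴾ` beyond `k`; a strictly decreasing sequence with a
descent into the minimum at `k - 1` has every descent except possibly at `k`.
-/

open Equiv

lemma prod_map_swap_succ_apply (m j : ℕ) :
    (((List.range m).map (fun i => swap (i + 1) (i + 2))).prod : Perm ℕ) j =
      if j = m + 1 then 1 else if 1 ≤ j ∧ j ≤ m then j + 1 else j := by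
  induction m generalizing j with
  | zero =>
    simp only [List.range_zero, List.map_nil, List.prod_nil, Perm.coe_one, id_eq]
    split_ifs <;> omega
  | succ m ih =>
    simp only [List.range_succ, List.map_append, List.prod_append, List.map_cons, List.map_nil,
      List.prod_cons, List.prod_nil, mul_one, Perm.mul_apply, swap_apply_def]
    split_ifs <;> rw [ih] <;> split_ifs <;> omega

theorem stmt0_general (n k : ℕ) (hk2 : 2 ≤ k) (hkn : k ≤ n)
    (w0P : Equiv.Perm ℕ)
    (hfix : w0P 1 = 1)
    (hrev : ∀ i : ℕ, 2 ≤ i → i ≤ n + 1 → w0P i = n + 3 - i)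
    (w : Equiv.Perm ℕ)
    (hw : w = w0P * ((List.range (k - 1)).map (fun i => Equiv.swap (i + 1) (i + 2))).prod) :
    ∀ j : ℕ, 1 ≤ j → j ≤ n → j ≠ k → w j > w (j + 1) := by
  intro j hj1 hjn hjk
  have rev_descent : ∀ i, 2 ≤ i → i ≤ n → w0P (i + 1) < w0P i := by
    intro i hi2 hin
    rw [hrev i hi2 (by omega), hrev (i + 1) (by omega) (by omega)]
    omega
  subst hw
  simp only [Perm.mul_apply, prod_map_swap_succ_apply, Nat.sub_add_cancel (by omega : 1 ≤ k)]
  obtain hlast | hbefore | hafter : j + 1 = k ∨ j + 1 < k ∨ k < j := by omega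
  · rw [if_neg (by omega), if_pos ⟨hj1, by omega⟩, if_pos hlast, hfix,
      hrev (j + 1) (by omega) (by omega)]
    omega
  · rw [if_neg (by omega), if_pos ⟨hj1, by omega⟩, if_neg (by omega), if_pos ⟨by omega, by omega⟩]
    exact rev_descent (j + 1) (by omega) (by omega)
  · rw [if_neg (by omega), if_neg (by omega), if_neg (by omega), if_neg (by omega)]
    exact rev_descent j (by omega) hjn

/-- Let `n ≥ 2` and consider the symmetric group `S_{n+1}` of permutations of
`{1,…,n+1}`, with simple transpositions `s_i = (i, i+1)` for `1 ≤ i ≤ n`, and with composition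
`(u·v)(i) = u(v(i))`.  Let `w₀ᴾ` be the longest element of the parabolic subgroup generated by
`s_2,…,s_n`, namely the permutation fixing `1` and sending `i` to `n+3−i` for `2 ≤ i ≤ n+1`.
Then for every `k` with `2 ≤ k ≤ n`, the element `w = w₀ᴾ·s_1·s_2⋯s_{k−1}` satisfies
`w(j) > w(j+1)` for every `j` with `1 ≤ j ≤ n` and `j ≠ k`; that is, every simple transposition
`s_j` with `j ≠ k` lies in the right descent set of `w`. -/
theorem stmt0 (n k : ℕ) (hn : 2 ≤ n) (hk2 : 2 ≤ k) (hkn : k ≤ n)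
    (w0P : Equiv.Perm ℕ)
    (hfix : w0P 1 = 1)
    (hrev : ∀ i : ℕ, 2 ≤ i → i ≤ n + 1 → w0P i = n + 3 - i)
    (w : Equiv.Perm ℕ)
    (hw : w = w0P * ((List.range (k - 1)).map (fun i => Equiv.swap (i + 1) (i + 2))).prod) :
    ∀ j : ℕ, 1 ≤ j → j ≤ n → j ≠ k → w j > w (j + 1) :=
  stmt0_general n k hk2 hkn w0P hfix hrev w hw
end

section
/- Fix n ≥ 1 and s ∈ ℂ, and let V be a ℂ-vector space with basis {v_c} indexed by the set of tuples c = (c_1,…,c_{n+1}) ∈ ℂ^{n+1} with c_1 + ⋯ + c_{n+1} = s. Then the formulas E_{ij}·v_c = c_j · v_{c + e_i − e_j} for 1 ≤ i ≠ j ≤ n+1 (where e_i are the standard basis vectors of ℂ^{n+1}) and H·v_c = (h_1 c_1 + ⋯ + h_{n+1} c_{n+1}) · v_c for every traceless diagonal matrix H = diag(h_1,…,h_{n+1}) extend uniquely by linearity to a Lie module structure over sl_{n+1}(ℂ) on V. Moreover, with respect to the Cartan subalgebra h of traceless diagonal matrices, each v_c is a weight vector of weight λ_c : diag(h_1,…,h_{n+1})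 ↦ Σ_i h_i c_i, distinct tuples c give distinct weights λ_c, and consequently every nonzero weight space of V is one-dimensional, spanned by a single v_c. -/
attribute [local instance 100] LieRing.ofAssociativeRing

namespace Paper

open LieAlgebra.SpecialLinear

/-- The index set: tuples `c ∈ ℂ^{n+1}` with `c_1 + ⋯ + c_{n+1} = s`. -/
def Idx (n : ℕ) (s : ℂ) : Type := {c : Fin (n + 1) → ℂ // ∑ i, c i = s}

/-- The vector space `V` with basis `{v_c}` indexed by `Idx n s`. -/
abbrev Vmod (n : ℕ) (s : ℂ) : Type := Idx n s →₀ ℂ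

/-- The basis vector `v_c`. -/
noncomputable def basisVec {n : ℕ} {s : ℂ} (c : Idx n s) : Vmod n s :=
  Finsupp.single c 1

/-- The shifted index `c + e_i − e_j`. -/
def shiftIdx {n : ℕ} {s : ℂ} (i j : Fin (n + 1)) (c : Idx n s) : Idx n s :=
  ⟨fun k => c.1 k + (if k = i then 1 else 0) - (if k = j then 1 else 0), by
    have hc := c.2
    simp [Finset.sum_add_distrib, Finset.sum_sub_distrib, hc]⟩

/-- The elementary matrix `E_{ij}` (with `i ≠ j`) as an element of `sl_{n+1}(ℂ)`. -/
def Eelt (n : ℕ) (i j : Fin (n + 1)) (h : i ≠ j) : sl (Fin (n + 1)) ℂ :=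
  LieAlgebra.SpecialLinear.single i j h 1

/-- A traceless diagonal matrix `diag(d)` as an element of `sl_{n+1}(ℂ)`. -/
def Delt (n : ℕ) (d : Fin (n + 1) → ℂ) (hd : ∑ i, d i = 0) : sl (Fin (n + 1)) ℂ :=
  ⟨Matrix.diagonal d, show Matrix.diagonal d ∈ LinearMap.ker (Matrix.traceLinearMap _ ℂ ℂ) by
    simp [LinearMap.mem_ker, Matrix.trace_diagonal, hd]⟩

/-- The defining formulas for the action of `sl_{n+1}(ℂ)` on `V`:
`E_{ij} · v_c = c_j · v_{c + e_i − e_j}` for `i ≠ j`, and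
`diag(h) · v_c = (Σ_i h_i c_i) · v_c` for traceless diagonal matrices. -/
def HasDefiningAction (n : ℕ) (s : ℂ)
    (ρ : sl (Fin (n + 1)) ℂ →ₗ⁅ℂ⁆ Module.End ℂ (Vmod n s)) : Prop :=
  (∀ (i j : Fin (n + 1)) (h : i ≠ j) (c : Idx n s),
    ρ (Eelt n i j h) (basisVec c) = c.1 j • basisVec (shiftIdx i j c)) ∧
  (∀ (d : Fin (n + 1) → ℂ) (hd : ∑ i, d i = 0) (c : Idx n s),
    ρ (Delt n d hd) (basisVec c) = (∑ i, d i * c.1 i) • basisVec c)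

section Helpers
variable {M : Type*} [AddCommMonoid M] {ι : Type*} [Fintype ι]

lemma sum3_rev (f : ι → ι → ι → M) :
    ∑ a, ∑ b, ∑ c, f a b c = ∑ c, ∑ b, ∑ a, f a b c := by
  trans ∑ b, ∑ a, ∑ c, f a b c
  · exact Finset.sum_comm
  trans ∑ b, ∑ c, ∑ a, f a b c
  · exact Finset.sum_congr rfl fun b _ => Finset.sum_comm
  exact Finset.sum_comm

lemma sum4_swap (f : ι → ι → ι → ι → M) :
    ∑ k, ∑ l, ∑ i, ∑ j, f i j k l = ∑ i, ∑ j, ∑ k, ∑ l, f i j k l := by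
  trans ∑ k, ∑ i, ∑ l, ∑ j, f i j k l
  · exact Finset.sum_congr rfl fun k _ => Finset.sum_comm
  trans ∑ i, ∑ k, ∑ l, ∑ j, f i j k l
  · exact Finset.sum_comm
  refine Finset.sum_congr rfl fun i _ => ?_
  trans ∑ k, ∑ j, ∑ l, f i j k l
  · exact Finset.sum_congr rfl fun k _ => Finset.sum_comm
  exact Finset.sum_comm

end Helpers

section Lemmas
variable {n : ℕ} {s : ℂ}

lemma shift_val (i j : Fin (n+1)) (c : Idx n s) (m : Fin (n+1)) :
    (shiftIdx i j c).1 m = c.1 m + (if m = i then 1 else 0) - (if m = j then 1 else 0) := rfl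

lemma shift_comm (i j k l : Fin (n+1)) (c : Idx n s) :
    shiftIdx i j (shiftIdx k l c) = shiftIdx k l (shiftIdx i j c) := by
  apply Subtype.ext; funext m
  simp only [shiftIdx]; ring

lemma shift_self (i : Fin (n+1)) (c : Idx n s) : shiftIdx i i c = c := by
  apply Subtype.ext; funext m
  simp only [shiftIdx]; ring

lemma shift_cancel₁ (i j l : Fin (n+1)) (c : Idx n s) :
    shiftIdx i j (shiftIdx j l c) = shiftIdx i l c := by
  apply Subtype.ext; funext m
  simp only [shiftIdx]; ring

lemma shift_cancel₂ (i j k : Fin (n+1)) (c : Idx n s) :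
    shiftIdx i j (shiftIdx k i c) = shiftIdx k j c := by
  apply Subtype.ext; funext m
  simp only [shiftIdx]; ring

noncomputable def Fmap (X : Matrix (Fin (n+1)) (Fin (n+1)) ℂ) (c : Idx n s) : Vmod n s :=
  ∑ i, ∑ j, (X i j * c.1 j) • basisVec (shiftIdx i j c)

noncomputable def toEnd (X : Matrix (Fin (n+1)) (Fin (n+1)) ℂ) : Vmod n s →ₗ[ℂ] Vmod n s :=
  Finsupp.linearCombination ℂ (Fmap X)

lemma toEnd_basis (X : Matrix (Fin (n+1)) (Fin (n+1)) ℂ) (c : Idx n s) :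
    toEnd X (basisVec c) = Fmap X c := by
  simp [toEnd, basisVec, Finsupp.linearCombination_single]

lemma Fmap_add (X Y : Matrix (Fin (n+1)) (Fin (n+1)) ℂ) (c : Idx n s) :
    Fmap (X + Y) c = Fmap X c + Fmap Y c := by
  simp [Fmap, Matrix.add_apply, add_mul, add_smul, Finset.sum_add_distrib]

lemma Fmap_smul (r : ℂ) (X : Matrix (Fin (n+1)) (Fin (n+1)) ℂ) (c : Idx n s) :
    Fmap (r • X) c = r • Fmap X c := by
  simp [Fmap, Matrix.smul_apply, smul_smul, Finset.smul_sum, mul_assoc]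

lemma Fmap_E (i j : Fin (n+1)) (c : Idx n s) :
    Fmap (Matrix.single i j 1) c = c.1 j • basisVec (shiftIdx i j c) := by
  simp only [Fmap, Matrix.single, Matrix.of_apply, ite_mul, one_mul, zero_mul,
    ite_smul, zero_smul]
  rw [Finset.sum_eq_single i, Finset.sum_eq_single j]
  · simp
  · intro b _ hb; simp [Ne.symm hb]
  · simp
  · intro a _ ha
    rw [Finset.sum_eq_zero]
    intro b _; simp [Ne.symm ha]
  · simp

lemma Fmap_D (d : Fin (n+1) → ℂ) (c : Idx n s) :
    Fmap (Matrix.diagonal d) c = (∑ i, d i * c.1 i) • basisVec c := by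
  simp only [Fmap, Matrix.diagonal_apply]
  rw [Finset.sum_smul]
  refine Finset.sum_congr rfl (fun i _ => ?_)
  rw [Finset.sum_eq_single i]
  · simp [shift_self]
  · intro b _ hb; simp [Ne.symm hb]
  · simp


lemma Fmap_sub (X Y : Matrix (Fin (n+1)) (Fin (n+1)) ℂ) (c : Idx n s) :
    Fmap (X - Y) c = Fmap X c - Fmap Y c := by
  simp [Fmap, Matrix.sub_apply, sub_mul, sub_smul, Finset.sum_sub_distrib]

lemma toEnd_single (Z : Matrix (Fin (n+1)) (Fin (n+1)) ℂ) (a : Idx n s) (b : ℂ) :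
    toEnd Z (Finsupp.single a b) = b • Fmap Z a :=
  Finsupp.linearCombination_single ..

lemma key (A B : Matrix (Fin (n+1)) (Fin (n+1)) ℂ) (c : Idx n s) :
    Fmap (A * B) c - Fmap (B * A) c = toEnd A (Fmap B c) - toEnd B (Fmap A c) := by
  have expand : ∀ (X Y : Matrix (Fin (n+1)) (Fin (n+1)) ℂ), toEnd X (Fmap Y c)
      = ∑ k, ∑ l, ∑ i, ∑ j,
          ((Y k l * c.1 l) * (X i j * (shiftIdx k l c).1 j)) •
            basisVec (shiftIdx i j (shiftIdx k l c)) := by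
    intro X Y
    rw [Fmap, map_sum]
    refine Finset.sum_congr rfl fun k _ => ?_
    rw [map_sum]
    refine Finset.sum_congr rfl fun l _ => ?_
    rw [map_smul, toEnd_basis, Fmap, Finset.smul_sum]
    refine Finset.sum_congr rfl fun i _ => ?_
    rw [Finset.smul_sum]
    refine Finset.sum_congr rfl fun j _ => ?_
    rw [smul_smul]
  rw [expand A B, expand B A]
  rw [sum4_swap (fun i j k l => ((B k l * c.1 l) * (A i j * (shiftIdx k l c).1 j)) •
        basisVec (shiftIdx i j (shiftIdx k l c)))]
  have step : (∑ i, ∑ j, ∑ k, ∑ l, ((B k l * c.1 l) * (A i j * (shiftIdx k l c).1 j)) •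
          basisVec (shiftIdx i j (shiftIdx k l c)))
      - (∑ i, ∑ j, ∑ k, ∑ l, ((A i j * c.1 j) * (B k l * (shiftIdx i j c).1 l)) •
          basisVec (shiftIdx k l (shiftIdx i j c)))
      = (∑ i, ∑ j, ∑ k, ∑ l, (A i j * B k l * (c.1 l * (if j = k then 1 else 0))) •
          basisVec (shiftIdx i j (shiftIdx k l c)))
      - (∑ i, ∑ j, ∑ k, ∑ l, (A i j * B k l * (c.1 j * (if l = i then 1 else 0))) •
          basisVec (shiftIdx i j (shiftIdx k l c))) := by
    simp only [← Finset.sum_sub_distrib]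
    refine Finset.sum_congr rfl fun i _ => Finset.sum_congr rfl fun j _ =>
      Finset.sum_congr rfl fun k _ => Finset.sum_congr rfl fun l _ => ?_
    rw [← shift_comm i j k l c, shift_val k l c j, shift_val i j c l,
      ← sub_smul, ← sub_smul]
    congr 1
    by_cases hjl : j = l
    · subst hjl
      simp only [eq_self_iff_true, if_true]
      ring
    · have hlj : ¬ (l = j) := fun h => hjl h.symm
      simp only [if_neg hjl, if_neg hlj]
      ring
  rw [step]
  congr 1
  · -- Fmap (A * B) c = S1
    refine Finset.sum_congr rfl fun i _ => ?_
    trans ∑ l, ∑ j, ((A i j * B j l) * c.1 l) • basisVec (shiftIdx i l c)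
    · refine Finset.sum_congr rfl fun l _ => ?_
      rw [Matrix.mul_apply, Finset.sum_mul, Finset.sum_smul]
    rw [Finset.sum_comm]
    refine Finset.sum_congr rfl fun j _ => ?_
    refine Eq.symm ?_
    rw [Finset.sum_eq_single j]
    · refine Finset.sum_congr rfl fun l _ => ?_
      rw [shift_cancel₁]
      simp only [eq_self_iff_true, if_true, mul_one]
    · intro k _ hk
      apply Finset.sum_eq_zero
      intro l _
      simp [if_neg (Ne.symm hk)]
    · simp
  · -- Fmap (B * A) c = S2
    refine Eq.symm ?_
    trans ∑ i, ∑ j, ∑ k, (A i j * B k i * c.1 j) • basisVec (shiftIdx k j c)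
    · refine Finset.sum_congr rfl fun i _ => Finset.sum_congr rfl fun j _ =>
        Finset.sum_congr rfl fun k _ => ?_
      rw [Finset.sum_eq_single i]
      · rw [shift_cancel₂]
        simp only [eq_self_iff_true, if_true, mul_one]
      · intro l _ hl
        simp [if_neg hl]
      · simp
    rw [sum3_rev (fun i j k => (A i j * B k i * c.1 j) • basisVec (shiftIdx k j c))]
    refine Finset.sum_congr rfl fun k _ => Finset.sum_congr rfl fun j _ => ?_
    rw [Matrix.mul_apply, Finset.sum_mul, Finset.sum_smul]
    refine Finset.sum_congr rfl fun i _ => ?_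
    congr 1
    ring
end Lemmas

section Lemmas
variable {n : ℕ} {s : ℂ}

noncomputable def rho : sl (Fin (n+1)) ℂ →ₗ⁅ℂ⁆ Module.End ℂ (Vmod n s) where
  toFun X := toEnd X.1
  map_add' X Y := by
    refine Finsupp.lhom_ext fun a b => ?_
    have h : ((X + Y : sl (Fin (n+1)) ℂ) : Matrix (Fin (n+1)) (Fin (n+1)) ℂ) = X.1 + Y.1 := rfl
    simp [h, toEnd_single, Fmap_add, smul_add]
  map_smul' r X := by
    refine Finsupp.lhom_ext fun a b => ?_
    show toEnd ((r • X : sl (Fin (n+1)) ℂ) : Matrix (Fin (n+1)) (Fin (n+1)) ℂ)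
        (Finsupp.single a b) = (r • toEnd X.1) (Finsupp.single a b)
    have h : ((r • X : sl (Fin (n+1)) ℂ) : Matrix (Fin (n+1)) (Fin (n+1)) ℂ) = r • X.1 := rfl
    rw [h, toEnd_single, Fmap_smul, LinearMap.smul_apply, toEnd_single, smul_comm]
  map_lie' := by
    intro X Y
    refine Finsupp.lhom_ext fun a b => ?_
    show toEnd ((⁅X, Y⁆ : sl (Fin (n+1)) ℂ) : Matrix (Fin (n+1)) (Fin (n+1)) ℂ)
        (Finsupp.single a b) = ⁅toEnd X.1, toEnd Y.1⁆ (Finsupp.single a b)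
    have h : ((⁅X, Y⁆ : sl (Fin (n+1)) ℂ) : Matrix (Fin (n+1)) (Fin (n+1)) ℂ)
        = X.1 * Y.1 - Y.1 * X.1 := rfl
    rw [h, toEnd_single, Fmap_sub, key, Ring.lie_def]
    simp only [LinearMap.sub_apply, Module.End.mul_apply, toEnd_single, map_smul, smul_sub]

lemma rho_apply (X : sl (Fin (n+1)) ℂ) : (rho (n := n) (s := s)) X = toEnd X.1 := rfl

lemma rho_has : HasDefiningAction n s rho := by
  constructor
  · intro i j h c
    have : ((Eelt n i j h : sl (Fin (n+1)) ℂ) : Matrix (Fin (n+1)) (Fin (n+1)) ℂ)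
        = Matrix.single i j 1 := rfl
    rw [rho_apply, this, toEnd_basis, Fmap_E]
  · intro d hd c
    have : ((Delt n d hd : sl (Fin (n+1)) ℂ) : Matrix (Fin (n+1)) (Fin (n+1)) ℂ)
        = Matrix.diagonal d := rfl
    rw [rho_apply, this, toEnd_basis, Fmap_D]

lemma trace_zero (X : sl (Fin (n+1)) ℂ) : ∑ i, X.1 i i = 0 := by
  have h : X.1 ∈ LinearMap.ker (Matrix.traceLinearMap (Fin (n+1)) ℂ ℂ) := X.2
  rw [LinearMap.mem_ker] at h
  have h2 : Matrix.trace X.1 = 0 := h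
  simpa [Matrix.trace, Matrix.diag] using h2

lemma sl_decomp (X : sl (Fin (n+1)) ℂ) :
    X = Delt n (fun i => X.1 i i) (trace_zero X)
      + ∑ i, ∑ j, if h : i = j then 0 else (X.1 i j) • Eelt n i j h := by
  apply Subtype.ext
  have hcoe : ((Delt n (fun i => X.1 i i) (trace_zero X)
      + ∑ i, ∑ j, if h : i = j then 0 else (X.1 i j) • Eelt n i j h :
        sl (Fin (n+1)) ℂ) : Matrix (Fin (n+1)) (Fin (n+1)) ℂ)
      = Matrix.diagonal (fun i => X.1 i i)
        + ∑ i, ∑ j, if h : i = j then (0 : Matrix (Fin (n+1)) (Fin (n+1)) ℂ)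
            else (X.1 i j) • Matrix.single i j 1 := by
    rw [AddMemClass.coe_add, AddSubmonoidClass.coe_finset_sum]
    congr 1
    refine Finset.sum_congr rfl fun i _ => ?_
    rw [AddSubmonoidClass.coe_finset_sum]
    refine Finset.sum_congr rfl fun j _ => ?_
    by_cases hij : i = j
    · rw [dif_pos hij, dif_pos hij]; rfl
    · rw [dif_neg hij, dif_neg hij]; rfl
  rw [hcoe]
  ext a b
  rw [Matrix.add_apply, Matrix.sum_apply]
  simp only [Matrix.sum_apply, dite_apply, Matrix.zero_apply, Matrix.smul_apply,
    Matrix.single, Matrix.of_apply, smul_eq_mul]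
  rw [Finset.sum_eq_single a]
  · rw [Finset.sum_eq_single b]
    · by_cases hab : a = b
      · subst hab
        rw [Matrix.diagonal_apply_eq, dif_pos rfl]
        simp
      · rw [Matrix.diagonal_apply_ne _ hab, dif_neg hab]
        simp
    · intro j _ hj
      by_cases h : a = j
      · simp [h]
      · simp [h, hj]
    · simp
  · intro i _ hi
    apply Finset.sum_eq_zero
    intro j _
    by_cases h : i = j
    · simp [h]
    · simp [h, hi]
  · simp

lemma rho_unique (ρ' : sl (Fin (n+1)) ℂ →ₗ⁅ℂ⁆ Module.End ℂ (Vmod n s))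
    (h : HasDefiningAction n s ρ') : ρ' = rho := by
  have hsingle : ∀ (a : Idx n s) (b : ℂ),
      (Finsupp.single a b : Vmod n s) = b • basisVec a := by
    intro a b; simp [basisVec, Finsupp.smul_single]
  have hE : ∀ (i j) (hij : i ≠ j), ρ' (Eelt n i j hij) = rho (Eelt n i j hij) := by
    intro i j hij
    refine Finsupp.lhom_ext fun a b => ?_
    rw [hsingle, map_smul, map_smul, h.1 i j hij a, (rho_has (n := n) (s := s)).1 i j hij a]
  have hD : ∀ d hd, ρ' (Delt n d hd) = rho (Delt n d hd) := by
    intro d hd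
    refine Finsupp.lhom_ext fun a b => ?_
    rw [hsingle, map_smul, map_smul, h.2 d hd a, (rho_has (n := n) (s := s)).2 d hd a]
  refine LieHom.ext fun X => ?_
  have expand : ∀ (ψ : sl (Fin (n+1)) ℂ →ₗ⁅ℂ⁆ Module.End ℂ (Vmod n s)),
      ψ (∑ i, ∑ j, if h : i = j then 0 else (X.1 i j) • Eelt n i j h)
      = ∑ i, ∑ j, if h : i = j then 0 else (X.1 i j) • ψ (Eelt n i j h) := by
    intro ψ
    show ψ.toLinearMap _ = _
    rw [map_sum]
    refine Finset.sum_congr rfl fun i _ => ?_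
    rw [map_sum]
    refine Finset.sum_congr rfl fun j _ => ?_
    by_cases hij : i = j
    · rw [dif_pos hij, dif_pos hij, map_zero]
    · rw [dif_neg hij, dif_neg hij, map_smul]; rfl
  conv_lhs => rw [sl_decomp X]
  conv_rhs => rw [sl_decomp X]
  rw [map_add, map_add, hD, expand ρ', expand rho]
  congr 1
  refine Finset.sum_congr rfl fun i _ => Finset.sum_congr rfl fun j _ => ?_
  by_cases hij : i = j
  · rw [dif_pos hij, dif_pos hij]
  · rw [dif_neg hij, dif_neg hij, hE i j hij]

lemma sep (c c' : Idx n s) (hne : c ≠ c') :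
    ∃ d : Fin (n+1) → ℂ, (∑ i, d i = 0) ∧ (∑ i, d i * c.1 i) ≠ (∑ i, d i * c'.1 i) := by
  have hfn : c.1 ≠ c'.1 := fun h => hne (Subtype.ext h)
  obtain ⟨i, hi⟩ : ∃ i, c.1 i ≠ c'.1 i := by
    by_contra hco; push_neg at hco; exact hfn (funext hco)
  have hsum : ∑ k, (c.1 k - c'.1 k) = 0 := by
    rw [Finset.sum_sub_distrib, c.2, c'.2, sub_self]
  obtain ⟨j, hj⟩ : ∃ j, c.1 j - c'.1 j ≠ c.1 i - c'.1 i := by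
    by_contra hco; push_neg at hco
    have h4 := (Finset.sum_congr rfl (fun k _ => hco k)).symm.trans hsum
    simp only [Finset.sum_const, Finset.card_univ, Fintype.card_fin, nsmul_eq_mul] at h4
    have hcast : ((n + 1 : ℕ) : ℂ) ≠ 0 := Nat.cast_ne_zero.2 (Nat.succ_ne_zero n)
    have := mul_eq_zero.1 h4
    rcases this with h | h
    · exact hcast h
    · exact hi (sub_eq_zero.1 h)
  refine ⟨fun k => (if k = i then 1 else 0) - (if k = j then 1 else 0), ?_, ?_⟩
  · simp [Finset.sum_sub_distrib, Finset.sum_ite_eq']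
  · have e : ∀ (x : Fin (n+1) → ℂ),
        ∑ k, ((if k = i then (1:ℂ) else 0) - (if k = j then 1 else 0)) * x k = x i - x j := by
      intro x
      simp [sub_mul, Finset.sum_sub_distrib, ite_mul, Finset.sum_ite_eq']
    rw [e c.1, e c'.1]
    intro hEq
    apply hj
    linear_combination -hEq

lemma diag_apply (T : Vmod n s →ₗ[ℂ] Vmod n s) (w : Idx n s → ℂ)
    (hT : ∀ c, T (basisVec c) = w c • basisVec c) (v : Vmod n s) (c : Idx n s) :
    (T v) c = w c * v c := by
  induction v using Finsupp.induction_linear with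
  | zero => simp
  | add f g hf hg => rw [map_add, Finsupp.add_apply, hf, hg, Finsupp.add_apply, mul_add]
  | single a b =>
    have hab : (Finsupp.single a b : Vmod n s) = b • basisVec a := by
      simp [basisVec, Finsupp.smul_single]
    rw [hab, map_smul, hT]
    simp only [basisVec, Finsupp.smul_apply, Finsupp.smul_single, Finsupp.single_apply,
      smul_eq_mul]
    by_cases h : a = c
    · subst h; simp; ring
    · simp [h]

end Lemmas

end Paper

open Paper LieAlgebra.SpecialLinear in
/-- Fix `n ≥ 1` and `s ∈ ℂ`, and let `V` be the ℂ-vector space with basis `{v_c}`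
indexed by tuples `c ∈ ℂ^{n+1}` with `Σ c_i = s`.  The formulas
`E_{ij}·v_c = c_j·v_{c+e_i−e_j}` (for `i ≠ j`) and `H·v_c = (Σ h_i c_i)·v_c` (for traceless
diagonal `H = diag(h)`) extend uniquely by linearity to a Lie module structure over
`sl_{n+1}(ℂ)` on `V`.  Moreover, with respect to the Cartan subalgebra of traceless diagonal
matrices, each `v_c` is a weight vector of weight `λ_c : diag(h) ↦ Σ h_i c_i`, distinct tuples
give distinct weights, and every nonzero weight space of `V` is one-dimensional, spanned by a
single `v_c`. -/
theorem stmt9 (n : ℕ) (hn : 1 ≤ n) (s : ℂ) :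
    -- existence and uniqueness of the Lie module structure
    (∃! ρ : sl (Fin (n + 1)) ℂ →ₗ⁅ℂ⁆ Module.End ℂ (Vmod n s), HasDefiningAction n s ρ) ∧
    -- distinct tuples give distinct weights
    (∀ c c' : Idx n s, c ≠ c' →
      ∃ d : Fin (n + 1) → ℂ, (∑ i, d i = 0) ∧ (∑ i, d i * c.1 i) ≠ (∑ i, d i * c'.1 i)) ∧
    -- every nonzero weight space is spanned by a single basis vector `v_c`
    (∀ ρ : sl (Fin (n + 1)) ℂ →ₗ⁅ℂ⁆ Module.End ℂ (Vmod n s), HasDefiningAction n s ρ →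
      ∀ Λ : (Fin (n + 1) → ℂ) → ℂ,
        (∃ v : Vmod n s, v ≠ 0 ∧
          ∀ (d : Fin (n + 1) → ℂ) (hd : ∑ i, d i = 0), ρ (Delt n d hd) v = Λ d • v) →
        ∃ c : Idx n s,
          {v : Vmod n s | ∀ (d : Fin (n + 1) → ℂ) (hd : ∑ i, d i = 0),
              ρ (Delt n d hd) v = Λ d • v}
            = (Submodule.span ℂ {basisVec c} : Set (Vmod n s))) := by
  refine ⟨⟨rho, rho_has, fun ρ' h => rho_unique ρ' h⟩, fun c c' h => sep c c' h, ?_⟩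
  rintro ρ hρ Λ ⟨v0, hv0, hv0w⟩
  have hdiagT : ∀ (d : Fin (n+1) → ℂ) (hd : ∑ i, d i = 0) (v : Vmod n s) (c : Idx n s),
      (ρ (Delt n d hd) v) c = (∑ i, d i * c.1 i) * v c :=
    fun d hd => diag_apply (ρ (Delt n d hd)) _ (fun c => hρ.2 d hd c)
  obtain ⟨c0, hc0⟩ := Finsupp.support_nonempty_iff.2 hv0
  have hc0v : v0 c0 ≠ 0 := Finsupp.mem_support_iff.1 hc0
  have hΛ : ∀ (d : Fin (n+1) → ℂ) (hd : ∑ i, d i = 0), Λ d = ∑ i, d i * c0.1 i := by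
    intro d hd
    have h1 := congrArg (fun f : Vmod n s => f c0) (hv0w d hd)
    simp only [Finsupp.smul_apply, smul_eq_mul] at h1
    rw [hdiagT d hd v0 c0] at h1
    exact (mul_right_cancel₀ hc0v h1).symm
  refine ⟨c0, ?_⟩
  ext v
  simp only [Set.mem_setOf_eq, SetLike.mem_coe, Submodule.mem_span_singleton]
  constructor
  · intro hv
    have hsupp : v.support ⊆ {c0} := by
      intro c hc
      simp only [Finset.mem_singleton]
      by_contra hne
      obtain ⟨d, hd, hdc⟩ := sep c c0 hne
      apply hdc
      have h1 := congrArg (fun f : Vmod n s => f c) (hv d hd)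
      simp only [Finsupp.smul_apply, smul_eq_mul] at h1
      rw [hdiagT d hd v c, hΛ d hd] at h1
      exact mul_right_cancel₀ (Finsupp.mem_support_iff.1 hc) h1
    refine ⟨v c0, ?_⟩
    have hvs := Finsupp.support_subset_singleton.1 hsupp
    rw [basisVec, Finsupp.smul_single, smul_eq_mul, mul_one]
    exact hvs.symm
  · rintro ⟨a, rfl⟩ d hd
    rw [map_smul, hρ.2 d hd c0, hΛ d hd, smul_comm]
end
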